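/- Consider the continuous-time problem: minimize ∫₀¹ (t − 1/2) x₁(t) dt over x ∈ L^∞([0,1]; ℝ²) subject to −(t − 1/2)[x₁(t)]³ + x₂(t) ≤ 0 and −x₂(t) ≤ 0 a.e. on [0,1]. The point x̄ ≡ (0,0) is feasible, and there exist no measurable functions v₁, v₂ ≥ 0 such that for a.e. t ∈ [0,1]: (t − 1/2, 0) + v₁(t)·(−3(t−1/2)·0², 1) + v₂(t)·(0, −1) = (0,0); i.e., the KKT conditions fail at x̄. -/
import Mathlib


open MeasureTheory

/-- Example 2: minimize ∫₀¹ (t−1/2)x₁ subject to −(t−1/2)x₁³ + x₂ ≤ 0,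
−x₂ ≤ 0.  The point x̄ ≡ (0,0) is feasible, yet no nonnegative multipliers
v₁, v₂ satisfy the stationarity equation a.e. on [0,1]: KKT fails at x̄. -/
theorem stmt_14 (xbar : ℝ → ℝ × ℝ) (hxbar : ∀ t, xbar t = (0, 0)) :
    (∀ t ∈ Set.Icc (0:ℝ) 1,
      -(t - 1/2) * (xbar t).1 ^ 3 + (xbar t).2 ≤ 0 ∧ -(xbar t).2 ≤ 0) ∧
    ¬ ∃ v₁ v₂ : ℝ → ℝ, Measurable v₁ ∧ Measurable v₂ ∧
      (∀ᵐ t ∂(volume.restrict (Set.Icc (0:ℝ) 1)),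
        0 ≤ v₁ t ∧ 0 ≤ v₂ t ∧
        ((t - 1/2, (0:ℝ)) + v₁ t • (-3 * (t - 1/2) * (xbar t).1 ^ 2, (1:ℝ))
          + v₂ t • ((0:ℝ), (-1:ℝ)) = ((0:ℝ), (0:ℝ)))) := by
  constructor
  · intro t _
    simp [hxbar t]
  · rintro ⟨v₁, v₂, -, -, h⟩
    have h2 : ∀ᵐ t ∂(volume.restrict (Set.Icc (0:ℝ) 1)), t = 1/2 := by
      filter_upwards [h] with t ht
      have := congrArg Prod.fst ht.2.2
      simp [hxbar t, Prod.fst, Prod.ext_iff] at this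
      linarith
    have : (volume.restrict (Set.Icc (0:ℝ) 1)) {t : ℝ | t ≠ 1/2} = 0 := h2
    rw [Measure.restrict_apply₀' measurableSet_Icc.nullMeasurableSet] at this
    have hsub : Set.Icc (0:ℝ) 1 ⊆ ({t : ℝ | t ≠ 1/2} ∩ Set.Icc 0 1) ∪ {(1/2 : ℝ)} := by
      intro t ht
      by_cases h' : t = 1/2
      · exact Or.inr h'
      · exact Or.inl ⟨h', ht⟩
    have := measure_mono_null hsub (measure_union_null this (measure_singleton _))
    simp [Real.volume_Icc] at this
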